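/- arXiv:2008.00972 — 4 statements merged into one kernel-verified Lean document; each statement's English description precedes it below -/
import Mathlib

section
/- Let φ be a repulsive potential on ℝ^d and Λ ⊂ ℝ^d a region. Let M ≥ 1 and δ > 0, and let 𝛌, 𝛌′ be activity functions on Λ with |𝛌(x)| ≤ M, |𝛌′(x)| ≤ M and |𝛌(x) − 𝛌′(x)| ≤ δ for all x ∈ Λ. Then |Z_Λ(𝛌) − Z_Λ(𝛌′)| ≤ δ·|Λ|·M·e^{|Λ|·M}. In particular, for each M > 0 the map 𝛌 ↦ Z_Λ(𝛌) is uniformly continuous in the sup norm on the set of activity functions bounded by M on Λ. (Lemma 2.4.) -/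
open MeasureTheory Filter

noncomputable section

/-- Euclidean space ℝ^d. -/
abbrev Euc (d : ℕ) := EuclideanSpace ℝ (Fin d)

/-- `e^{-t}` for `t ∈ [0,∞]`, with the convention `e^{-∞} = 0`. -/
def expNeg (t : ENNReal) : ℝ := if t = ⊤ then 0 else Real.exp (-t.toReal)

/-- The Boltzmann pair weight `∏_{1 ≤ i < j ≤ k} e^{-φ(x_i - x_j)}`. -/
def pairWeight {d : ℕ} (φ : Euc d → ENNReal) (k : ℕ) (x : Fin k → Euc d) : ℝ :=
  ∏ p ∈ Finset.univ.filter (fun p : Fin k × Fin k => p.1 < p.2), expNeg (φ (x p.1 - x p.2))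

/-- The partition function `Z_Λ(𝛌)` of a complex activity function `𝛌` on a region `Λ`. -/
def ZΛ {d : ℕ} (φ : Euc d → ENNReal) (Λ : Set (Euc d)) (lam : Euc d → ℂ) : ℂ :=
  ∑' k : ℕ, ((Nat.factorial k : ℂ))⁻¹ *
    ∫ x in Set.univ.pi (fun _ : Fin k => Λ),
      (∏ i, lam (x i)) * ((pairWeight φ k x : ℝ) : ℂ)

/-!
Since `φ ≥ 0`, the pair weight lies in `[0, 1]`. On `Λ^k` the products `∏ᵢ 𝛌(xᵢ)` and
`∏ᵢ 𝛌'(xᵢ)` differ by at most `k δ M^k` (telescoping), so the `k`-th terms of the two series differ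
by at most `δ k (|Λ| M)^k / k!`, and `∑ₖ k yᵏ / k! = y eʸ`.
-/

open MeasureTheory Set
open scoped Finset

lemma expNeg_nonneg (t : ENNReal) : 0 ≤ expNeg t := by
  unfold expNeg
  split_ifs
  · exact le_rfl
  · exact (Real.exp_pos _).le

lemma expNeg_le_one (t : ENNReal) : expNeg t ≤ 1 := by
  unfold expNeg
  split_ifs
  · exact zero_le_one
  · exact Real.exp_le_one_iff.mpr (neg_nonpos.mpr ENNReal.toReal_nonneg)

lemma measurable_expNeg : Measurable expNeg :=
  Measurable.ite (measurableSet_singleton ⊤) measurable_const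
    (Real.measurable_exp.comp ENNReal.measurable_toReal.neg)

theorem Finset.norm_prod_sub_prod_le {ι R : Type*} [NormedCommRing R] [NormOneClass R]
    {s : Finset ι} {f g : ι → R} {M δ : ℝ} (hM : 1 ≤ M)
    (hf : ∀ i ∈ s, ‖f i‖ ≤ M) (hg : ∀ i ∈ s, ‖g i‖ ≤ M) (hfg : ∀ i ∈ s, ‖f i - g i‖ ≤ δ) :
    ‖∏ i ∈ s, f i - ∏ i ∈ s, g i‖ ≤ #s * δ * M ^ #s := by
  induction s using Finset.cons_induction with
  | empty => simp
  | cons a s ha ih =>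
    simp only [Finset.forall_mem_cons] at hf hg hfg
    have hδ : 0 ≤ δ := (norm_nonneg _).trans hfg.1
    have hg_prod : ‖∏ i ∈ s, g i‖ ≤ M ^ #s :=
      calc ‖∏ i ∈ s, g i‖ ≤ ∏ i ∈ s, ‖g i‖ := Finset.norm_prod_le _ _
        _ ≤ ∏ _i ∈ s, M := Finset.prod_le_prod (fun _ _ => norm_nonneg _) hg.2
        _ = M ^ #s := Finset.prod_const M
    have hgap : 0 ≤ δ * M ^ #s * (M - 1) := by have := sub_nonneg.2 hM; positivity
    rw [Finset.prod_cons, Finset.prod_cons, Finset.card_cons]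
    calc ‖f a * ∏ i ∈ s, f i - g a * ∏ i ∈ s, g i‖
        = ‖f a * (∏ i ∈ s, f i - ∏ i ∈ s, g i) + (f a - g a) * ∏ i ∈ s, g i‖ := by
          congr 1; ring
      _ ≤ ‖f a‖ * ‖∏ i ∈ s, f i - ∏ i ∈ s, g i‖ + ‖f a - g a‖ * ‖∏ i ∈ s, g i‖ :=
          (norm_add_le _ _).trans (add_le_add (norm_mul_le _ _) (norm_mul_le _ _))
      _ ≤ M * (#s * δ * M ^ #s) + δ * M ^ #s := by
          gcongr
          exacts [hf.1, ih hf.2 hg.2 hfg.2, hfg.1]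
      _ ≤ (#s + 1 : ℕ) * δ * M ^ (#s + 1) := by
          push_cast
          linear_combination hgap

theorem Real.hasSum_nat_mul_pow_div_factorial (x : ℝ) :
    HasSum (fun n : ℕ => n * x ^ n / n.factorial) (x * Real.exp x) := by
  have hshift : (fun n : ℕ => ((n + 1 : ℕ) : ℝ) * x ^ (n + 1) / (n + 1).factorial) =
      fun n => x * (x ^ n / n.factorial) := by
    funext n
    rw [Nat.factorial_succ]
    push_cast
    field_simp
    ring
  refine (hasSum_nat_add_iff' 1).mp ?_
  rw [Finset.sum_range_one, hshift, Real.exp_eq_exp_ℝ]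
  simpa using (NormedSpace.expSeries_div_hasSum_exp x).mul_left x

lemma volume_univ_pi_const {ι E : Type*} [Fintype ι] [MeasureSpace E]
    [SigmaFinite (volume : Measure E)] (Λ : Set E) :
    volume (univ.pi fun _ : ι => Λ) = volume Λ ^ Fintype.card ι := by
  simp [volume_pi_pi, Finset.prod_const]

lemma norm_setIntegral_univ_pi_le {ι E F : Type*} [Fintype ι] [MeasureSpace E]
    [SigmaFinite (volume : Measure E)] [NormedAddCommGroup F] [NormedSpace ℝ F]
    {Λ : Set E} (hΛ : volume Λ < ⊤) {f : (ι → E) → F} {C : ℝ}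
    (hf : ∀ x ∈ univ.pi fun _ => Λ, ‖f x‖ ≤ C) :
    ‖∫ x in univ.pi fun _ => Λ, f x‖ ≤ C * (volume Λ).toReal ^ Fintype.card ι := by
  have hfin : volume (univ.pi fun _ : ι => Λ) < ⊤ := by
    rw [volume_univ_pi_const]
    exact ENNReal.pow_lt_top hΛ
  have h := norm_setIntegral_le_of_norm_le_const hfin hf
  rwa [measureReal_def, volume_univ_pi_const, ENNReal.toReal_pow] at h

section

variable {d : ℕ} {φ : Euc d → ENNReal} {Λ : Set (Euc d)} {lam lam' : Euc d → ℂ} {M δ : ℝ}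

lemma measurable_pairWeight (hφ : Measurable φ) (k : ℕ) : Measurable (pairWeight φ k) :=
  Finset.measurable_prod _ fun p _ =>
    measurable_expNeg.comp (hφ.comp ((measurable_pi_apply p.1).sub (measurable_pi_apply p.2)))

lemma norm_mul_pairWeight_le (a : ℂ) (k : ℕ) (x : Fin k → Euc d) :
    ‖a * (pairWeight φ k x : ℂ)‖ ≤ ‖a‖ := by
  have h₀ : 0 ≤ pairWeight φ k x := Finset.prod_nonneg fun _ _ => expNeg_nonneg _
  have h₁ : pairWeight φ k x ≤ 1 :=
    Finset.prod_le_one (fun _ _ => expNeg_nonneg _) fun _ _ => expNeg_le_one _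
  rw [norm_mul, Complex.norm_real, Real.norm_of_nonneg h₀]
  exact mul_le_of_le_one_right (norm_nonneg a) h₁

variable (φ lam) in
def ZΛintegrand (k : ℕ) (x : Fin k → Euc d) : ℂ :=
  (∏ i, lam (x i)) * (pairWeight φ k x : ℂ)

variable (φ Λ lam) in
def ZΛterm (k : ℕ) : ℂ :=
  (k.factorial : ℂ)⁻¹ * ∫ x in univ.pi fun _ : Fin k => Λ, ZΛintegrand φ lam k x

lemma ZΛ_eq_tsum_ZΛterm : ZΛ φ Λ lam = ∑' k, ZΛterm φ Λ lam k := rfl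

lemma measurable_ZΛintegrand (hφ : Measurable φ) (hlam : Measurable lam) (k : ℕ) :
    Measurable (ZΛintegrand φ lam k) :=
  (Finset.measurable_prod _ fun i _ => hlam.comp (measurable_pi_apply i)).mul
    (Complex.measurable_ofReal.comp (measurable_pairWeight hφ k))

lemma norm_ZΛintegrand_le (hbd : ∀ y ∈ Λ, ‖lam y‖ ≤ M) {k : ℕ} {x : Fin k → Euc d}
    (hx : x ∈ univ.pi fun _ => Λ) : ‖ZΛintegrand φ lam k x‖ ≤ M ^ k :=
  calc ‖ZΛintegrand φ lam k x‖ ≤ ‖∏ i, lam (x i)‖ := norm_mul_pairWeight_le _ k x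
    _ ≤ ∏ i, ‖lam (x i)‖ := Finset.norm_prod_le _ _
    _ ≤ ∏ _i : Fin k, M :=
        Finset.prod_le_prod (fun _ _ => norm_nonneg _) fun i _ => hbd _ (hx i trivial)
    _ = M ^ k := by simp

lemma norm_ZΛintegrand_sub_le (hM : 1 ≤ M) (hbd : ∀ y ∈ Λ, ‖lam y‖ ≤ M)
    (hbd' : ∀ y ∈ Λ, ‖lam' y‖ ≤ M) (hclose : ∀ y ∈ Λ, ‖lam y - lam' y‖ ≤ δ) {k : ℕ}
    {x : Fin k → Euc d} (hx : x ∈ univ.pi fun _ => Λ) :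
    ‖ZΛintegrand φ lam k x - ZΛintegrand φ lam' k x‖ ≤ k * δ * M ^ k := by
  have hmem : ∀ i, x i ∈ Λ := fun i => hx i trivial
  have hprod := Finset.norm_prod_sub_prod_le (s := Finset.univ) hM
    (fun i _ => hbd _ (hmem i)) (fun i _ => hbd' _ (hmem i)) (fun i _ => hclose _ (hmem i))
  rw [Finset.card_univ, Fintype.card_fin] at hprod
  rw [ZΛintegrand, ZΛintegrand, ← sub_mul]
  exact (norm_mul_pairWeight_le _ k x).trans hprod

lemma integrableOn_ZΛintegrand (hφ : Measurable φ) (hΛm : MeasurableSet Λ)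
    (hΛ : volume Λ < ⊤) (hlam : Measurable lam) (hbd : ∀ y ∈ Λ, ‖lam y‖ ≤ M) (k : ℕ) :
    IntegrableOn (ZΛintegrand φ lam k) (univ.pi fun _ => Λ) := by
  refine IntegrableOn.of_bound ?_ (measurable_ZΛintegrand hφ hlam k).aestronglyMeasurable
    (M ^ k) (ae_restrict_of_forall_mem (.univ_pi fun _ => hΛm) fun x hx =>
      norm_ZΛintegrand_le hbd hx)
  rw [volume_univ_pi_const]
  exact ENNReal.pow_lt_top hΛ

lemma norm_ZΛterm_le (hΛ : volume Λ < ⊤) (hbd : ∀ y ∈ Λ, ‖lam y‖ ≤ M) (k : ℕ) :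
    ‖ZΛterm φ Λ lam k‖ ≤ (M * (volume Λ).toReal) ^ k / k.factorial := by
  have h := norm_setIntegral_univ_pi_le hΛ fun (x : Fin k → Euc d) hx =>
    norm_ZΛintegrand_le (φ := φ) hbd hx
  rw [Fintype.card_fin, ← mul_pow] at h
  rw [ZΛterm, norm_mul, norm_inv, Complex.norm_natCast, inv_mul_eq_div]
  gcongr

lemma summable_ZΛterm (hΛ : volume Λ < ⊤) (hbd : ∀ y ∈ Λ, ‖lam y‖ ≤ M) :
    Summable (ZΛterm φ Λ lam) :=
  .of_norm_bounded (Real.summable_pow_div_factorial _) (norm_ZΛterm_le hΛ hbd)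

lemma norm_ZΛterm_sub_le (hφ : Measurable φ) (hΛm : MeasurableSet Λ) (hΛ : volume Λ < ⊤)
    (hlam : Measurable lam) (hlam' : Measurable lam') (hM : 1 ≤ M)
    (hbd : ∀ y ∈ Λ, ‖lam y‖ ≤ M) (hbd' : ∀ y ∈ Λ, ‖lam' y‖ ≤ M)
    (hclose : ∀ y ∈ Λ, ‖lam y - lam' y‖ ≤ δ) (k : ℕ) :
    ‖ZΛterm φ Λ lam k - ZΛterm φ Λ lam' k‖ ≤
      δ * (k * (M * (volume Λ).toReal) ^ k / k.factorial) := by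
  have h := norm_setIntegral_univ_pi_le hΛ fun (x : Fin k → Euc d) hx =>
    norm_ZΛintegrand_sub_le (φ := φ) hM hbd hbd' hclose hx
  rw [Fintype.card_fin] at h
  rw [ZΛterm, ZΛterm, ← mul_sub, ← integral_sub (integrableOn_ZΛintegrand hφ hΛm hΛ hlam hbd k)
    (integrableOn_ZΛintegrand hφ hΛm hΛ hlam' hbd' k), norm_mul, norm_inv,
    Complex.norm_natCast, inv_mul_eq_div]
  calc _ ≤ k * δ * M ^ k * (volume Λ).toReal ^ k / k.factorial := by gcongr
    _ = _ := by ring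

end

theorem Z_uniformly_continuous_general
    (d : ℕ)
    (φ : Euc d → ENNReal) (hφmeas : Measurable φ)
    (Λ : Set (Euc d)) (hΛmeas : MeasurableSet Λ) (hΛbdd : Bornology.IsBounded Λ)
    (M δ : ℝ) (hM : 1 ≤ M)
    (lam lam' : Euc d → ℂ)
    (hlam_meas : Measurable lam) (hlam'_meas : Measurable lam')
    (hlam_bd : ∀ x ∈ Λ, ‖lam x‖ ≤ M)
    (hlam'_bd : ∀ x ∈ Λ, ‖lam' x‖ ≤ M)
    (hclose : ∀ x ∈ Λ, ‖lam x - lam' x‖ ≤ δ) :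
    ‖ZΛ φ Λ lam - ZΛ φ Λ lam'‖ ≤
      δ * (volume Λ).toReal * M * Real.exp ((volume Λ).toReal * M) := by
  have hΛ : volume Λ < ⊤ := hΛbdd.measure_lt_top
  rw [ZΛ_eq_tsum_ZΛterm, ZΛ_eq_tsum_ZΛterm,
    ← (summable_ZΛterm hΛ hlam_bd).tsum_sub (summable_ZΛterm hΛ hlam'_bd)]
  calc _ ≤ δ * (M * (volume Λ).toReal * Real.exp (M * (volume Λ).toReal)) :=
        tsum_of_norm_bounded ((Real.hasSum_nat_mul_pow_div_factorial _).mul_left δ)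
          (norm_ZΛterm_sub_le hφmeas hΛmeas hΛ hlam_meas hlam'_meas hM hlam_bd hlam'_bd hclose)
    _ = _ := by ring_nf

/-- Lemma 2.4: quantitative uniform continuity of `𝛌 ↦ Z_Λ(𝛌)` in the sup norm. -/
theorem Z_uniformly_continuous
    (d : ℕ) (hd : 1 ≤ d)
    (φ : Euc d → ENNReal) (hφmeas : Measurable φ)
    (hφsymm : ∀ x, φ (-x) = φ x)
    (Λ : Set (Euc d)) (hΛmeas : MeasurableSet Λ) (hΛbdd : Bornology.IsBounded Λ)
    (M δ : ℝ) (hM : 1 ≤ M) (hδ : 0 < δ)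
    (lam lam' : Euc d → ℂ)
    (hlam_meas : Measurable lam) (hlam'_meas : Measurable lam')
    (hlam_supp : ∀ x ∉ Λ, lam x = 0) (hlam'_supp : ∀ x ∉ Λ, lam' x = 0)
    (hlam_bd : ∀ x ∈ Λ, ‖lam x‖ ≤ M)
    (hlam'_bd : ∀ x ∈ Λ, ‖lam' x‖ ≤ M)
    (hclose : ∀ x ∈ Λ, ‖lam x - lam' x‖ ≤ δ) :
    ‖ZΛ φ Λ lam - ZΛ φ Λ lam'‖ ≤
      δ * (volume Λ).toReal * M * Real.exp ((volume Λ).toReal * M) :=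
  Z_uniformly_continuous_general d φ hφmeas Λ hΛmeas hΛbdd M δ hM lam lam' hlam_meas hlam'_meas
    hlam_bd hlam'_bd hclose

end
end

section
/- Let C > 0 be real. For each λ_0 ∈ [0, e/C) there exists δ > 0 so that for all λ ∈ [0, λ_0] and all real z ≥ 0, (C λ e · e^z · e^{−e^z}) / (1 + C λ e · e^{−e^z}) ≤ 1 − δ. (Lemma 3.3: |g′_λ(z)| ≤ 1 − δ, where g_λ(z) = log(1 + C λ e · e^{−e^z}) and g′_λ(z) = −C λ e · e^z e^{−e^z}/(1 + C λ e · e^{−e^z}).) -/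
/-!
Write `a = Cλe` and `u = e^z ≥ 1`; multiplying through by `e^u` the quantity becomes
`a u / (e^u + a)`. The tangent line of `exp` at `2` gives `e² (u - 1) ≤ e^u`, so
`a u < e^u + a` as soon as `a < e²`, which is exactly `λ < e / C`. Keeping track of the
gap `e² - Cλ₀e` makes the bound uniform in `λ ≤ λ₀` and `z ≥ 0`.
-/

open Real

lemma sq_exp_one_mul_sub_one_le_exp (u : ℝ) : exp 1 ^ 2 * (u - 1) ≤ exp u := by
  have hsplit : exp u = exp 1 ^ 2 * exp (u - 2) := by
    rw [← exp_nat_mul, ← exp_add]; norm_num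
  rw [hsplit]
  gcongr
  linarith [add_one_le_exp (u - 2)]

lemma mul_exp_neg_div_one_add_mul_exp_neg (a u : ℝ) :
    a * u * exp (-u) / (1 + a * exp (-u)) = a * u / (exp u + a) := by
  rw [exp_neg]
  field_simp

lemma mul_sub_one_add_le_mul_exp {a u δ : ℝ} (ha : 0 ≤ a) (hu : 1 ≤ u) (hδ : 0 ≤ δ)
    (h : a * (1 + exp 1 * δ) ≤ (1 - δ) * exp 1 ^ 2) :
    a * (u - 1 + δ) ≤ (1 - δ) * exp u := by
  have htangent := mul_le_mul_of_nonneg_left (sq_exp_one_mul_sub_one_le_exp u) ha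
  have he_le : exp 1 ≤ exp u := exp_le_exp.mpr hu
  have hgap := mul_le_mul_of_nonneg_left he_le (mul_nonneg (mul_nonneg ha hδ) (exp_pos 1).le)
  have hscaled := mul_le_mul_of_nonneg_right h (exp_pos u).le
  have he2 : 0 < exp 1 ^ 2 := by positivity
  nlinarith

lemma mul_div_exp_add_le_one_sub {a u δ : ℝ} (ha : 0 ≤ a) (hu : 1 ≤ u) (hδ : 0 ≤ δ)
    (h : a * (1 + exp 1 * δ) ≤ (1 - δ) * exp 1 ^ 2) :
    a * u / (exp u + a) ≤ 1 - δ := by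
  rw [div_le_iff₀ (by positivity)]
  linarith [mul_sub_one_add_le_mul_exp ha hu hδ h]

/-- Lemma 3.3: for `λ₀ ∈ [0, e/C)` there is `δ > 0` with
`|g′_λ(z)| = Cλe·e^z·e^{−e^z}/(1 + Cλe·e^{−e^z}) ≤ 1 − δ` for all
`λ ∈ [0,λ₀]` and all `z ≥ 0`. -/
theorem g_deriv_strict_contraction
    (C : ℝ) (hC : 0 < C)
    (lam0 : ℝ) (hlam0 : lam0 ∈ Set.Ico 0 (Real.exp 1 / C)) :
    ∃ δ > 0, ∀ lam ∈ Set.Icc (0 : ℝ) lam0, ∀ z : ℝ, 0 ≤ z →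
      C * lam * Real.exp 1 * Real.exp z * Real.exp (-Real.exp z) /
        (1 + C * lam * Real.exp 1 * Real.exp (-Real.exp z)) ≤ 1 - δ := by
  obtain ⟨hlam0_nonneg, hlam0_lt⟩ := hlam0
  set e := exp 1
  have he : 0 < e := exp_pos 1
  have ha0 : C * lam0 * e < e ^ 2 := by
    rw [lt_div_iff₀ hC] at hlam0_lt
    nlinarith
  set δ := (e ^ 2 - C * lam0 * e) / (e ^ 2 * (1 + e))
  have hδ : 0 < δ := div_pos (by linarith) (by positivity)
  have hδ_def : δ * (e ^ 2 * (1 + e)) = e ^ 2 - C * lam0 * e := div_mul_cancel₀ _ (by positivity)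
  refine ⟨δ, hδ, fun lam ⟨hlam, hlam_le⟩ z hz => ?_⟩
  rw [mul_exp_neg_div_one_add_mul_exp_neg]
  have ha : C * lam * e ≤ C * lam0 * e := by gcongr
  refine mul_div_exp_add_le_one_sub (by positivity) (one_le_exp hz) hδ.le ?_
  nlinarith [mul_le_mul_of_nonneg_right ha (by positivity : (0 : ℝ) ≤ 1 + e * δ),
    mul_le_mul_of_nonneg_left ha0.le (mul_nonneg hδ.le he.le)]
end

section
/- Let C > 0 be real and fix λ_0 ∈ [0, e/C). Define g_λ(z) = Log(1 + C λ e · e^{−e^z}) for λ, z ∈ ℂ, where Log is the principal branch of the complex logarithm. Then there exist ε_1, ε_2 > 0 and ε_3 ∈ (0, ε_2) such that for any λ ∈ 𝒩(λ_0, ε_1) and any z ∈ 𝒩̄(log(1+e), ε_2), one has 1 + C λ e · e^{−e^z} ≠ 0 and g_λ(z) ∈ 𝒩(log(1+e), ε_3). (Lemma 3.5, the one-point contraction.) -/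
/-!
For real `λ = t ∈ [0, λ₀]` and `z = u ∈ [0, log (1 + e)]` the number `b = C t e e^{-e^u}` lies in
`[0, C λ₀] ⊆ [0, e)`, so `g_t(u) = log (1 + b)` lies in `[0, log (1 + e)]`, and the real map
`u ↦ g_t(u)` has derivative `-e^u b / (1 + b)`, of size at most a constant `q < 1` depending only
on `C λ₀`. Moving `t` and `u` into the complex plane by at most `ε₁` and `ε₂` therefore moves the
value by at most `C e ε₁ + q ε₂ + O(ε₂²)`, which is below `ε₂` once `ε₂` is small and `ε₁` is a
small multiple of `ε₂`.
-/

/-- The open neighborhood `𝒩(s,ε) = {z ∈ ℂ : dist(z,[0,s]) < ε}`. -/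
def NN (s ε : ℝ) : Set ℂ := {z | ∃ t ∈ Set.Icc (0 : ℝ) s, ‖z - t‖ < ε}

/-- The closed neighborhood `𝒩̄(s,ε) = {z ∈ ℂ : dist(z,[0,s]) ≤ ε}`. -/
def NNbar (s ε : ℝ) : Set ℂ := {z | ∃ t ∈ Set.Icc (0 : ℝ) s, ‖z - t‖ ≤ ε}

namespace Complex

lemma norm_exp_sub_one_le_mul {w : ℂ} (hw : ‖w‖ ≤ 1) : ‖exp w - 1‖ ≤ ‖w‖ * (1 + ‖w‖) := by
  calc ‖exp w - 1‖ = ‖(exp w - 1 - w) + w‖ := by ring_nf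
    _ ≤ ‖w‖ ^ 2 + ‖w‖ := norm_add_le_of_le (norm_exp_sub_one_sub_id_le hw) le_rfl
    _ = ‖w‖ * (1 + ‖w‖) := by ring

lemma norm_exp_sub_exp_le {z w : ℂ} (h : ‖z - w‖ ≤ 1) :
    ‖exp z - exp w‖ ≤ ‖exp w‖ * (‖z - w‖ * (1 + ‖z - w‖)) := by
  rw [show exp z - exp w = exp w * (exp (z - w) - 1) by rw [mul_sub, ← exp_add]; ring_nf,
    norm_mul]
  exact mul_le_mul_of_nonneg_left (norm_exp_sub_one_le_mul h) (norm_nonneg _)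

lemma ne_zero_and_norm_log_sub_log_ofReal_le {s : ℝ} (hs : 0 < s) {w : ℂ}
    (h : ‖w - s‖ ≤ s / 2) :
    w ≠ 0 ∧ ‖log w - Real.log s‖ ≤ ‖w - s‖ / s + (‖w - s‖ / s) ^ 2 := by
  set v : ℂ := (w - s) / s
  have hv : ‖v‖ = ‖w - s‖ / s := by simp [v, abs_of_pos hs]
  have hv_half : ‖v‖ ≤ 1 / 2 := by rw [hv, div_le_iff₀ hs]; linarith
  have hw : w = s * (1 + v) := by
    rw [mul_add, mul_one, mul_div_cancel₀ _ (ofReal_ne_zero.2 hs.ne')]; ring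
  have hv1 : 1 + v ≠ 0 := by
    intro h0
    rw [show v = -1 by linear_combination h0] at hv_half
    norm_num at hv_half
  refine ⟨hw ▸ mul_ne_zero (ofReal_ne_zero.2 hs.ne') hv1, ?_⟩
  rw [← hv, hw, log_ofReal_mul hs hv1, add_sub_cancel_left]
  have hinv : (1 - ‖v‖)⁻¹ ≤ 2 := by
    rw [inv_le_comm₀ (by linarith) (by norm_num)]; linarith
  calc ‖log (1 + v)‖ ≤ ‖v‖ ^ 2 * (1 - ‖v‖)⁻¹ / 2 + ‖v‖ := norm_log_one_add_le (by linarith)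
    _ ≤ ‖v‖ ^ 2 * 2 / 2 + ‖v‖ := by gcongr
    _ = ‖v‖ + ‖v‖ ^ 2 := by ring

end Complex

/-- For `0 ≤ s ≤ m ≤ e`, `x ≥ 1` and `b = s e e^{-x}` one has `x b = b + b (x - 1) ≤ b + m / e`,
hence `x b / (1 + b) ≤ (m + m / e) / (1 + m)`, the value below. For `x = e^u`, `x b / (1 + b)` is
the size of the derivative of the real map `u ↦ log (1 + s e e^{-e^u})`. -/
noncomputable def contractionConst (m : ℝ) : ℝ :=
  m * (Real.exp 1 + 1) / (Real.exp 1 * (1 + m))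

lemma contractionConst_nonneg {m : ℝ} (hm : 0 ≤ m) : 0 ≤ contractionConst m := by
  unfold contractionConst; positivity

lemma contractionConst_lt_one {m : ℝ} (hm : 0 ≤ m) (hmE : m < Real.exp 1) :
    contractionConst m < 1 := by
  rw [contractionConst, div_lt_one (by positivity)]
  nlinarith

lemma mul_exp_one_mul_exp_neg_le {s x : ℝ} (hs : 0 ≤ s) (hx : 1 ≤ x) :
    s * Real.exp 1 * Real.exp (-x) ≤ s := by
  rw [mul_assoc, ← Real.exp_add]
  exact mul_le_of_le_one_right hs (Real.exp_le_one_iff.2 (by linarith))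

lemma mul_exp_one_mul_exp_neg_mul_sub_one_le {s x : ℝ} (hs : 0 ≤ s) :
    s * Real.exp 1 * Real.exp (-x) * (x - 1) ≤ s / Real.exp 1 := by
  have hx : x - 1 ≤ Real.exp (x - 2) := by linarith [Real.add_one_le_exp (x - 2)]
  calc s * Real.exp 1 * Real.exp (-x) * (x - 1)
      ≤ s * Real.exp 1 * Real.exp (-x) * Real.exp (x - 2) := by gcongr
    _ = s * Real.exp (1 + -x + (x - 2)) := by rw [Real.exp_add, Real.exp_add]; ring
    _ = s / Real.exp 1 := by rw [div_eq_mul_inv, ← Real.exp_neg]; ring_nf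

lemma mul_le_contractionConst_mul {s m x : ℝ} (hs : 0 ≤ s) (hsm : s ≤ m) (hmE : m ≤ Real.exp 1)
    (hx : 1 ≤ x) :
    x * (s * Real.exp 1 * Real.exp (-x)) ≤
      contractionConst m * (1 + s * Real.exp 1 * Real.exp (-x)) := by
  have hb := mul_exp_one_mul_exp_neg_le hs hx
  have hbx := mul_exp_one_mul_exp_neg_mul_sub_one_le (x := x) hs
  set b := s * Real.exp 1 * Real.exp (-x)
  have hb0 : 0 ≤ b := by positivity
  have hE : 0 < Real.exp 1 := Real.exp_pos 1
  have hm : 0 ≤ m := hs.trans hsm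
  rw [contractionConst, div_mul_eq_mul_div, le_div_iff₀ (by positivity)]
  have hEbx : Real.exp 1 * (b * (x - 1)) ≤ m := by
    rw [le_div_iff₀ hE] at hbx; linarith
  nlinarith [mul_nonneg (sub_nonneg.2 (hb.trans hsm)) (sub_nonneg.2 hmE)]

open Complex in
lemma norm_exp_neg_exp_le_and_norm_sub_le {u r : ℝ} (hu0 : 0 ≤ u) (hu4 : Real.exp u ≤ 4)
    (hr : r ≤ 1 / 16) {z : ℂ} (hz : ‖z - u‖ ≤ r) :
    ‖exp (-exp z)‖ ≤ 1 ∧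
      ‖exp (-exp z) - Real.exp (-Real.exp u)‖ ≤
        Real.exp (-Real.exp u) * Real.exp u * (r * (1 + r) * (1 + 8 * r)) := by
  set x := Real.exp u
  have hx1 : 1 ≤ x := Real.one_le_exp hu0
  have hr0 : 0 ≤ r := (norm_nonneg _).trans hz
  have hW : ‖exp z - x‖ ≤ x * (r * (1 + r)) := by
    have h := norm_exp_sub_exp_le (hz.trans (by linarith))
    rw [← ofReal_exp, norm_real, Real.norm_of_nonneg (Real.exp_pos u).le] at h
    refine h.trans (mul_le_mul_of_nonneg_left ?_ (Real.exp_pos u).le)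
    gcongr
  have hW8 : ‖exp z - x‖ ≤ 8 * r := by
    refine hW.trans ?_
    nlinarith [mul_le_mul_of_nonneg_left hu4 (mul_nonneg hr0 (by linarith : (0 : ℝ) ≤ 1 + r))]
  constructor
  · have hre : 0 ≤ (exp z).re := by
      have := neg_abs_le (exp z - x).re
      have := abs_re_le_norm (exp z - x)
      simp only [sub_re, ofReal_re] at *
      linarith
    rw [norm_exp, neg_re, Real.exp_le_one_iff]
    linarith
  · have h := norm_exp_sub_exp_le (z := -exp z) (w := -(x : ℂ))
      (by rw [neg_sub_neg, norm_sub_rev]; linarith)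
    rw [neg_sub_neg, norm_sub_rev (x : ℂ), ← ofReal_neg, ← ofReal_exp, norm_real,
      Real.norm_of_nonneg (Real.exp_pos _).le] at h
    refine h.trans ?_
    rw [mul_assoc]
    gcongr _ * ?_
    calc ‖exp z - x‖ * (1 + ‖exp z - x‖) ≤ x * (r * (1 + r)) * (1 + 8 * r) := by gcongr
      _ = x * (r * (1 + r) * (1 + 8 * r)) := by ring

open Complex in
lemma norm_mul_exp_neg_exp_sub_le {C t m u r : ℝ} (hC : 0 ≤ C) (ht : 0 ≤ t) (hCt : C * t ≤ m)
    (hmE : m ≤ Real.exp 1) (hu0 : 0 ≤ u) (hu4 : Real.exp u ≤ 4) (hr : r ≤ 1 / 16)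
    (lam : ℂ) {z : ℂ} (hz : ‖z - u‖ ≤ r) :
    ‖C * lam * Real.exp 1 * exp (-exp z) - ↑(C * t * Real.exp 1 * Real.exp (-Real.exp u))‖ ≤
      C * Real.exp 1 * ‖lam - t‖ +
        contractionConst m * (1 + C * t * Real.exp 1 * Real.exp (-Real.exp u)) *
          (r * (1 + r) * (1 + 8 * r)) := by
  obtain ⟨hexp_le_one, hexp_sub⟩ := norm_exp_neg_exp_le_and_norm_sub_le hu0 hu4 hr hz
  have hcontr :=
    mul_le_contractionConst_mul (mul_nonneg hC ht) hCt hmE (Real.one_le_exp hu0)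
  have hr0 : 0 ≤ r := (norm_nonneg _).trans hz
  have hCE : 0 ≤ C * Real.exp 1 := by positivity
  rw [show (C : ℂ) * lam * Real.exp 1 * exp (-exp z) -
        ↑(C * t * Real.exp 1 * Real.exp (-Real.exp u)) =
      ↑(C * Real.exp 1) * ((lam - t) * exp (-exp z)) +
        ↑(C * t * Real.exp 1) * (exp (-exp z) - ↑(Real.exp (-Real.exp u))) by push_cast; ring]
  refine (norm_add_le _ _).trans (add_le_add ?_ ?_)
  · rw [norm_mul, norm_mul, norm_real, Real.norm_of_nonneg hCE]
    gcongr
    exact mul_le_of_le_one_right (norm_nonneg _) hexp_le_one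
  · rw [norm_mul, norm_real, Real.norm_of_nonneg (by positivity)]
    calc C * t * Real.exp 1 * ‖exp (-exp z) - ↑(Real.exp (-Real.exp u))‖
        ≤ C * t * Real.exp 1 *
            (Real.exp (-Real.exp u) * Real.exp u * (r * (1 + r) * (1 + 8 * r))) := by gcongr
      _ = Real.exp u * (C * t * Real.exp 1 * Real.exp (-Real.exp u)) *
            (r * (1 + r) * (1 + 8 * r)) := by ring
      _ ≤ _ := by gcongr

lemma exists_contraction_radii {q K : ℝ} (hq0 : 0 ≤ q) (hq1 : q < 1) (hK : 0 < K) :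
    ∃ ε1 > 0, ∃ ε2 > 0, ∃ ε3, 0 < ε3 ∧ ε3 < ε2 ∧ ε2 ≤ 1 / 16 ∧
      ∀ η H : ℝ, η < ε1 → 0 ≤ H → H ≤ K * η + q * (ε2 * (1 + ε2) * (1 + 8 * ε2)) →
        H ≤ 1 / 2 ∧ H + H ^ 2 < ε3 := by
  set δ := 1 - q
  have hδ : 0 < δ := by linarith
  set ε2 := min (1 / 16) (δ / 100)
  have hε2 : 0 < ε2 := lt_min (by norm_num) (by positivity)
  have hε2_small : ε2 ≤ 1 / 16 := min_le_left _ _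
  have hε2_δ : ε2 ≤ δ / 100 := min_le_right _ _
  refine ⟨δ * ε2 / (8 * K), by positivity, ε2, hε2, ε2 * (1 - δ / 2), by nlinarith,
    by nlinarith, hε2_small, fun η H hη hH0 hH => ?_⟩
  have hKη : K * η < δ * ε2 / 8 := by
    rw [lt_div_iff₀ (by positivity)] at hη; linarith
  have hρ : ε2 * (1 + ε2) * (1 + 8 * ε2) ≤ ε2 + δ * ε2 / 10 := by
    nlinarith [mul_le_mul_of_nonneg_left hε2_small (mul_nonneg hε2.le hε2.le)]
  have hqρ : q * (ε2 * (1 + ε2) * (1 + 8 * ε2)) ≤ q * ε2 + δ * ε2 / 10 := by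
    nlinarith [mul_le_mul_of_nonneg_left hρ hq0, mul_pos hδ hε2]
  have hH_lt : H < ε2 * (1 - 3 * δ / 4) := by nlinarith
  have hH_le : H ≤ ε2 := by nlinarith
  have hH_sq : H ^ 2 ≤ ε2 * (δ / 100) := by
    nlinarith [mul_le_mul hH_le hH_le hH0 hε2.le, mul_le_mul_of_nonneg_left hε2_δ hε2.le]
  constructor <;> nlinarith

/-- Lemma 3.5 (one-point contraction): for `λ₀ ∈ [0,e/C)` there are `ε₁, ε₂ > 0`
and `ε₃ ∈ (0,ε₂)` so that for `λ ∈ 𝒩(λ₀,ε₁)` and `z ∈ 𝒩̄(log(1+e),ε₂)`,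
`1 + Cλe·e^{−e^z} ≠ 0` and `g_λ(z) = Log(1 + Cλe·e^{−e^z}) ∈ 𝒩(log(1+e),ε₃)`. -/
theorem one_point_contraction
    (C : ℝ) (hC : 0 < C)
    (lam0 : ℝ) (hlam0 : lam0 ∈ Set.Ico 0 (Real.exp 1 / C)) :
    ∃ ε1 > 0, ∃ ε2 > 0, ∃ ε3 : ℝ, 0 < ε3 ∧ ε3 < ε2 ∧
      ∀ lam ∈ NN lam0 ε1, ∀ z ∈ NNbar (Real.log (1 + Real.exp 1)) ε2,
        1 + (C : ℂ) * lam * (Real.exp 1 : ℂ) * Complex.exp (-Complex.exp z) ≠ 0 ∧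
        Complex.log (1 + (C : ℂ) * lam * (Real.exp 1 : ℂ) * Complex.exp (-Complex.exp z)) ∈
          NN (Real.log (1 + Real.exp 1)) ε3 := by
  obtain ⟨hlam0_nonneg, hlam0_lt⟩ := hlam0
  have hm0 : 0 ≤ C * lam0 := mul_nonneg hC.le hlam0_nonneg
  have hmE : C * lam0 < Real.exp 1 := by rwa [lt_div_iff₀ hC, mul_comm] at hlam0_lt
  obtain ⟨ε1, hε1, ε2, hε2, ε3, hε3, hε32, hε2_small, hradii⟩ :=
    exists_contraction_radii (contractionConst_nonneg hm0) (contractionConst_lt_one hm0 hmE)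
      (by positivity : 0 < C * Real.exp 1)
  refine ⟨ε1, hε1, ε2, hε2, ε3, hε3, hε32, ?_⟩
  rintro lam ⟨t, ⟨ht0, htlam0⟩, hlam⟩ z ⟨u, ⟨hu0, huL⟩, hz⟩
  have hCt : C * t ≤ C * lam0 := mul_le_mul_of_nonneg_left htlam0 hC.le
  have hu4 : Real.exp u ≤ 4 := by
    refine (Real.exp_le_exp.2 huL).trans ?_
    rw [Real.exp_log (by positivity)]
    linarith [Real.exp_one_lt_d9]
  have hdiff := norm_mul_exp_neg_exp_sub_le hC.le ht0 hCt hmE.le hu0 hu4 hε2_small lam hz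
  set b := C * t * Real.exp 1 * Real.exp (-Real.exp u)
  have hb0 : 0 ≤ b := by positivity
  have hbE : b < Real.exp 1 :=
    ((mul_exp_one_mul_exp_neg_le (by positivity) (Real.one_le_exp hu0)).trans hCt).trans_lt hmE
  set w := 1 + (C : ℂ) * lam * (Real.exp 1 : ℂ) * Complex.exp (-Complex.exp z)
  have hw : w - ↑(1 + b) = C * lam * Real.exp 1 * Complex.exp (-Complex.exp z) - ↑b := by
    push_cast [w]; ring
  obtain ⟨hH_half, hH_lt⟩ := hradii ‖lam - t‖ (‖w - ↑(1 + b)‖ / (1 + b)) hlam (by positivity) <| by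
    rw [hw, div_le_iff₀ (by positivity)]
    nlinarith [mul_le_mul_of_nonneg_left (le_add_of_nonneg_right hb0 : 1 ≤ 1 + b)
      (by positivity : 0 ≤ C * Real.exp 1 * ‖lam - t‖)]
  obtain ⟨hw0, hlog⟩ := Complex.ne_zero_and_norm_log_sub_log_ofReal_le
    (by positivity : 0 < 1 + b) (w := w)
    (by rw [div_le_iff₀ (by positivity)] at hH_half; linarith)
  refine ⟨hw0, Real.log (1 + b), ⟨Real.log_nonneg (by linarith), ?_⟩, hlog.trans_lt hH_lt⟩
  exact Real.log_le_log (by linarith) (by linarith)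
end

section
/- For every real r > 0 there exists ε_0 > 0 such that for all ε ∈ (0, ε_0], the image of 𝒩̄(r, ε) = {z ∈ ℂ : dist(z, [0,r]) ≤ ε} under the map z ↦ e^z is a convex subset of ℂ. (Fact 3.6.) -/
open Set Metric Pointwise

theorem Convex.smul_set_of_subset_Ioi {𝕜 E : Type*} [Field 𝕜] [LinearOrder 𝕜]
    [IsStrictOrderedRing 𝕜] [AddCommGroup E] [Module 𝕜 E] {S : Set 𝕜} {K : Set E}
    (hS : Convex 𝕜 S) (hS_pos : S ⊆ Ioi 0) (hK : Convex 𝕜 K) : Convex 𝕜 (S • K) := by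
  rintro _ ⟨s₁, hs₁, k₁, hk₁, rfl⟩ _ ⟨s₂, hs₂, k₂, hk₂, rfl⟩ a b ha hb hab
  have hs : a * s₁ + b * s₂ ∈ S := hS hs₁ hs₂ ha hb hab
  have hs_pos : 0 < a * s₁ + b * s₂ := hS_pos hs
  have hs₁_pos : 0 < s₁ := hS_pos hs₁
  have hs₂_pos : 0 < s₂ := hS_pos hs₂
  refine ⟨_, hs, (a * s₁ / (a * s₁ + b * s₂)) • k₁ + (b * s₂ / (a * s₁ + b * s₂)) • k₂,
    hK hk₁ hk₂ (by positivity) (by positivity) (by field_simp), ?_⟩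
  simp only [smul_add, smul_smul]
  congr 2 <;> field_simp

theorem Complex.norm_smul_exp_add_smul_exp_sub_one_le {a b : ℝ} (ha : 0 ≤ a) (hb : 0 ≤ b)
    (hab : a + b = 1) {δ : ℂ} (hδ : ‖δ‖ ≤ 1) :
    ‖a • exp (b • δ) + b • exp (-(a • δ)) - 1‖ ≤ a * b * ‖δ‖ ^ 2 := by
  have hbδ : ‖b • δ‖ ≤ 1 := by
    rw [norm_smul, Real.norm_of_nonneg hb]; nlinarith [norm_nonneg δ]
  have haδ : ‖-(a • δ)‖ ≤ 1 := by
    rw [norm_neg, norm_smul, Real.norm_of_nonneg ha]; nlinarith [norm_nonneg δ]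
  have hsplit : a • exp (b • δ) + b • exp (-(a • δ)) - 1
      = a • (exp (b • δ) - 1 - b • δ) + b • (exp (-(a • δ)) - 1 - -(a • δ)) := by
    have hab' : (a : ℂ) + b = 1 := by exact_mod_cast hab
    simp only [real_smul]
    linear_combination hab'
  calc ‖a • exp (b • δ) + b • exp (-(a • δ)) - 1‖
      ≤ a * ‖b • δ‖ ^ 2 + b * ‖-(a • δ)‖ ^ 2 := by
        rw [hsplit]
        refine (norm_add_le _ _).trans ?_
        rw [norm_smul, norm_smul, Real.norm_of_nonneg ha, Real.norm_of_nonneg hb]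
        gcongr
        exacts [norm_exp_sub_one_sub_id_le hbδ, norm_exp_sub_one_sub_id_le haδ]
    _ = a * b * ‖δ‖ ^ 2 * (a + b) := by
        rw [norm_neg, norm_smul, norm_smul, Real.norm_of_nonneg ha, Real.norm_of_nonneg hb]
        ring
    _ = a * b * ‖δ‖ ^ 2 := by rw [hab, mul_one]

theorem norm_smul_add_smul_sq_add_mul_norm_sub_sq {E : Type*} [NormedAddCommGroup E]
    [InnerProductSpace ℝ E] {a b : ℝ} (hab : a + b = 1) (x y : E) :
    ‖a • x + b • y‖ ^ 2 + a * b * ‖x - y‖ ^ 2 = a * ‖x‖ ^ 2 + b * ‖y‖ ^ 2 := by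
  rw [norm_add_sq_real, norm_sub_sq_real, norm_smul, norm_smul, inner_smul_left,
    inner_smul_right, Real.norm_eq_abs, Real.norm_eq_abs, mul_pow, mul_pow, sq_abs, sq_abs]
  obtain rfl : b = 1 - a := by linarith
  simp only [conj_trivial]
  ring

theorem Complex.exists_exp_eq_of_norm_sub_one_le {g : ℂ} {B : ℝ} (hg : ‖g - 1‖ ≤ B)
    (hB : B ≤ 1 / 2) : ∃ w, ‖w‖ ≤ 3 / 2 * B ∧ exp w = g := by
  have hg0 : g ≠ 0 := by
    rintro rfl
    norm_num at hg
    linarith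
  refine ⟨log g, ?_, exp_log hg0⟩
  calc ‖log g‖ = ‖log (1 + (g - 1))‖ := by rw [add_sub_cancel]
    _ ≤ 3 / 2 * ‖g - 1‖ := norm_log_one_add_half_le_self (hg.trans hB)
    _ ≤ 3 / 2 * B := by gcongr

theorem Complex.convex_exp_image_closedBall {ε : ℝ} (hε : ε ≤ 1 / 4) :
    Convex ℝ (exp '' closedBall 0 ε) := by
  rintro _ ⟨u₁, hu₁, rfl⟩ _ ⟨u₂, hu₂, rfl⟩ a b ha hb hab
  rw [mem_closedBall_zero_iff] at hu₁ hu₂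
  set m := a • u₁ + b • u₂
  set B := a * b * ‖u₁ - u₂‖ ^ 2
  have hδ : ‖u₁ - u₂‖ ≤ 2 * ε := (norm_sub_le _ _).trans (by linarith)
  have hε0 : 0 ≤ ε := (norm_nonneg _).trans hu₁
  have hbudget : ‖m‖ ^ 2 + B ≤ ε ^ 2 := by
    rw [norm_smul_add_smul_sq_add_mul_norm_sub_sq hab]
    have := pow_le_pow_left₀ (norm_nonneg _) hu₁ 2
    have := pow_le_pow_left₀ (norm_nonneg _) hu₂ 2
    nlinarith
  have hB0 : 0 ≤ B := by positivity
  have hm : ‖m‖ ≤ ε := by nlinarith [norm_nonneg m]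
  obtain ⟨w, hw, hexp⟩ := exists_exp_eq_of_norm_sub_one_le
    (norm_smul_exp_add_smul_exp_sub_one_le ha hb hab (hδ.trans (by linarith)))
    (show B ≤ 1 / 2 by nlinarith [norm_nonneg m])
  refine ⟨m + w, mem_closedBall_zero_iff.2 ?_, ?_⟩
  · calc ‖m + w‖ ≤ ‖m‖ + 3 / 2 * (ε ^ 2 - ‖m‖ ^ 2) := by
          linarith [norm_add_le m w]
      _ ≤ ε := by nlinarith [norm_nonneg m]
  · have hab' : (a : ℂ) + b = 1 := by exact_mod_cast hab
    have h₁ : m + b • (u₁ - u₂) = u₁ := by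
      simp only [m, real_smul]; linear_combination u₁ * hab'
    have h₂ : m + -(a • (u₁ - u₂)) = u₂ := by
      simp only [m, real_smul]; linear_combination u₂ * hab'
    calc exp (m + w) = a • exp (m + b • (u₁ - u₂)) + b • exp (m + -(a • (u₁ - u₂))) := by
          rw [exp_add m w, hexp]; simp only [exp_add m, real_smul]; ring
      _ = a • exp u₁ + b • exp u₂ := by rw [h₁, h₂]

theorem Complex.exp_image_NNbar (s ε : ℝ) :
    exp '' NNbar s ε = Icc 1 (Real.exp s) • (exp '' closedBall 0 ε) := by
  ext w
  constructor
  · rintro ⟨z, ⟨t, ht, hz⟩, rfl⟩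
    refine ⟨Real.exp t, ⟨Real.one_le_exp ht.1, Real.exp_le_exp.2 ht.2⟩, exp (z - t),
      ⟨z - t, mem_closedBall_zero_iff.2 hz, rfl⟩, ?_⟩
    change Real.exp t • exp (z - t) = exp z
    rw [real_smul, ofReal_exp, ← exp_add, add_sub_cancel]
  · rintro ⟨c, hc, _, ⟨u, hu, rfl⟩, rfl⟩
    have hc0 : 0 < c := one_pos.trans_le hc.1
    refine ⟨Real.log c + u, ⟨Real.log c, ⟨Real.log_nonneg hc.1,
      (Real.log_le_iff_le_exp hc0).2 hc.2⟩, by simpa using hu⟩, ?_⟩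
    rw [exp_add, ← ofReal_exp, Real.exp_log hc0]
    exact (real_smul ..).symm

theorem exp_image_convex_general (r : ℝ) :
    ∃ ε0 > 0, ∀ ε : ℝ, 0 < ε → ε ≤ ε0 →
      Convex ℝ (Complex.exp '' NNbar r ε) := by
  refine ⟨1 / 4, by norm_num, fun ε _ hε => ?_⟩
  rw [Complex.exp_image_NNbar]
  exact (convex_Icc _ _).smul_set_of_subset_Ioi (fun c hc => one_pos.trans_le hc.1)
    (Complex.convex_exp_image_closedBall hε)

/-- Fact 3.6: for `r > 0` and all sufficiently small `ε > 0`, the image of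
`𝒩̄(r,ε)` under `z ↦ e^z` is convex. -/
theorem exp_image_convex (r : ℝ) (hr : 0 < r) :
    ∃ ε0 > 0, ∀ ε : ℝ, 0 < ε → ε ≤ ε0 →
      Convex ℝ (Complex.exp '' NNbar r ε) :=
  exp_image_convex_general r
end
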